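/- Let X be a real Hilbert space and let T : X → X be an affine nonexpansive map (i.e., T x = S x + b for a continuous linear nonexpansive operator S and some b ∈ X) with F := Fix T ≠ ∅. Let (λ_n) be a sequence in [0,1] with ∑_{n∈ℕ} (1−λ_n)λ_n = +∞, let x_0 ∈ X, and define x_{n+1} := (1−λ_n)x_n + λ_n T x_n for all n. Then (x_n) converges strongly to P_F x_0, the metric projection of x_0 onto the closed affine subspace F. -/

import Mathlib

/-!
Subtracting a fixed point `p₀` of `T` turns the iteration into `xₙ - p₀ = Pₙ (x₀ - p₀)`, where
`Pₙ = Aₙ₋₁ ⋯ A₀` and `Aₖ = (1 - λₖ) + λₖ S`. Each `Aₖ` is a contraction commuting with `S` and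
fixing `Fix S`, and `‖Aₖ z‖² ≤ ‖z‖² - (1 - λₖ) λₖ ‖z - S z‖²`. Along an orbit `yₙ = Pₙ z` the
residual `‖yₙ - S yₙ‖ = ‖Pₙ (z - S z)‖` decreases, and the energy bound makes
`∑ (1 - λₙ) λₙ ‖yₙ - S yₙ‖²` finite; as `∑ (1 - λₙ) λₙ = ∞` the residual tends to `0`. Thus
`Pₙ → 0` pointwise on the range of `1 - S`, hence on its closure since the `Pₙ` are uniformly
`1`-Lipschitz. For a contraction `S` that closure is `(Fix S)ᗮ`, so `Pₙ y` tends to the orthogonal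
projection of `y` onto `Fix S`, and `Fix T = p₀ + Fix S`.
-/

open Filter Topology

lemma norm_one_sub_smul_add_smul_sq {X : Type*} [NormedAddCommGroup X] [InnerProductSpace ℝ X]
    (t : ℝ) (a c : X) :
    ‖(1 - t) • a + t • c‖ ^ 2 = (1 - t) * ‖a‖ ^ 2 + t * ‖c‖ ^ 2 - (1 - t) * t * ‖a - c‖ ^ 2 := by
  rw [norm_add_sq_real, norm_sub_sq_real, norm_smul, norm_smul, real_inner_smul_left,
    real_inner_smul_right, Real.norm_eq_abs, Real.norm_eq_abs, mul_pow, mul_pow, sq_abs, sq_abs]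
  ring

lemma Submodule.norm_sub_starProjection_le {X : Type*} [NormedAddCommGroup X]
    [InnerProductSpace ℝ X] {K : Submodule ℝ X} [K.HasOrthogonalProjection] (y : X) {w : X}
    (hw : w ∈ K) : ‖y - K.starProjection y‖ ≤ ‖y - w‖ :=
  (K.starProjection_minimal y).trans_le <|
    ciInf_le ⟨0, Set.forall_mem_range.2 fun _ => norm_nonneg _⟩ (⟨w, hw⟩ : K)

lemma tendsto_zero_of_antitone_of_summable_mul_sq {a d : ℕ → ℝ} (hd : Antitone d)
    (hd₀ : ∀ n, 0 ≤ d n) (ha : ∀ n, 0 ≤ a n) (hsum : Summable fun n => a n * d n ^ 2)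
    (hdiv : ¬ Summable a) : Tendsto d atTop (𝓝 0) := by
  have hbdd : BddBelow (Set.range d) := ⟨0, Set.forall_mem_range.2 hd₀⟩
  convert tendsto_atTop_ciInf hd hbdd
  by_contra! hc
  set c := ⨅ n, d n
  have hc : 0 < c := (le_ciInf hd₀).lt_of_ne hc
  refine hdiv (.of_nonneg_of_le ha (fun n => ?_) (hsum.div_const (c ^ 2)))
  rw [le_div_iff₀ (by positivity)]
  have := ciInf_le hbdd n
  have := ha n
  gcongr

lemma ContinuousLinearMap.orthogonal_range_one_sub_le_eqLocus {X : Type*} [NormedAddCommGroup X]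
    [InnerProductSpace ℝ X] {S : X →L[ℝ] X}
    (hS : ∀ z, ‖S z‖ ≤ ‖z‖) :
    (LinearMap.range (1 - (S : X →ₗ[ℝ] X)))ᗮ ≤ S.eqLocus (1 : X →L[ℝ] X) := by
  intro z hz
  have hSz : inner ℝ (S z) z = ‖z‖ ^ 2 := by
    have := (Submodule.mem_orthogonal _ z).1 hz _ (LinearMap.mem_range_self _ z)
    simp only [LinearMap.sub_apply, Module.End.one_apply, ContinuousLinearMap.coe_coe,
      inner_sub_left, real_inner_self_eq_norm_sq] at this
    linarith
  exact eq_of_norm_le_re_inner_eq_norm_sq (𝕜 := ℝ) (hS z) hSz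

section KrasnoselskiiMann

variable {X : Type*} [NormedAddCommGroup X] [InnerProductSpace ℝ X] {S : X →L[ℝ] X}
  {lam : ℕ → ℝ}

def kmStep (S : X →L[ℝ] X) (t : ℝ) : X →L[ℝ] X := (1 - t) • 1 + t • S

-- `kmIter S lam n` sends `x₀` to the `n`-th Krasnosel'skiĭ–Mann iterate of `S` with steps `lam`.
def kmIter (S : X →L[ℝ] X) (lam : ℕ → ℝ) : ℕ → X →L[ℝ] X
  | 0 => 1
  | n + 1 => kmStep S (lam n) * kmIter S lam n

lemma kmStep_apply (t : ℝ) (z : X) : kmStep S t z = (1 - t) • z + t • S z := rfl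

lemma kmIter_succ_apply (n : ℕ) (z : X) :
    kmIter S lam (n + 1) z = kmStep S (lam n) (kmIter S lam n z) := rfl

lemma commute_kmIter (n : ℕ) : Commute S (kmIter S lam n) := by
  induction n with
  | zero => exact Commute.one_right S
  | succ n ih =>
    refine Commute.mul_right ?_ ih
    exact ((Commute.one_right S).smul_right _).add_right ((Commute.refl S).smul_right _)

lemma kmIter_apply_sub (n : ℕ) (z : X) :
    kmIter S lam n (z - S z) = kmIter S lam n z - S (kmIter S lam n z) := by
  rw [map_sub]
  exact congrArg (_ - ·) (DFunLike.congr_fun (commute_kmIter n).eq z).symm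

lemma kmIter_apply_eq_self {z : X} (hz : S z = z) (n : ℕ) : kmIter S lam n z = z := by
  induction n with
  | zero => rfl
  | succ n ih => rw [kmIter_succ_apply, ih, kmStep_apply, hz, ← add_smul, sub_add_cancel, one_smul]

variable (hS : ∀ z, ‖S z‖ ≤ ‖z‖)
include hS

lemma norm_kmStep_apply_sq_le {t : ℝ} (ht : t ∈ Set.Icc (0 : ℝ) 1) (z : X) :
    ‖kmStep S t z‖ ^ 2 ≤ ‖z‖ ^ 2 - (1 - t) * t * ‖z - S z‖ ^ 2 := by
  rw [kmStep_apply, norm_one_sub_smul_add_smul_sq]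
  have : ‖S z‖ ^ 2 ≤ ‖z‖ ^ 2 := by gcongr; exact hS z
  nlinarith [ht.1]

lemma norm_kmStep_apply_le {t : ℝ} (ht : t ∈ Set.Icc (0 : ℝ) 1) (z : X) :
    ‖kmStep S t z‖ ≤ ‖z‖ := by
  refine le_of_pow_le_pow_left₀ two_ne_zero (norm_nonneg z) ?_
  have := ht.1
  have := sub_nonneg.2 ht.2
  exact (norm_kmStep_apply_sq_le hS ht z).trans (sub_le_self _ (by positivity))

variable (hlam : ∀ n, lam n ∈ Set.Icc (0 : ℝ) 1)
include hlam

lemma norm_kmIter_apply_le (n : ℕ) (z : X) : ‖kmIter S lam n z‖ ≤ ‖z‖ := by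
  induction n with
  | zero => rfl
  | succ n ih => exact (norm_kmStep_apply_le hS (hlam n) _).trans ih

lemma summable_mul_norm_kmIter_apply_sub_sq (z : X) :
    Summable fun n => (1 - lam n) * lam n * ‖kmIter S lam n (z - S z)‖ ^ 2 := by
  have hnonneg n : 0 ≤ (1 - lam n) * lam n * ‖kmIter S lam n (z - S z)‖ ^ 2 := by
    have := (hlam n).1
    have := sub_nonneg.2 (hlam n).2
    positivity
  have hdecr n : (1 - lam n) * lam n * ‖kmIter S lam n (z - S z)‖ ^ 2 ≤
      ‖kmIter S lam n z‖ ^ 2 - ‖kmIter S lam (n + 1) z‖ ^ 2 := by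
    rw [kmIter_apply_sub, kmIter_succ_apply]
    linarith [norm_kmStep_apply_sq_le hS (hlam n) (kmIter S lam n z)]
  refine summable_of_sum_range_le (c := ‖z‖ ^ 2) hnonneg fun n => ?_
  calc _ ≤ ∑ k ∈ Finset.range n, (‖kmIter S lam k z‖ ^ 2 - ‖kmIter S lam (k + 1) z‖ ^ 2) :=
        Finset.sum_le_sum fun k _ => hdecr k
    _ = ‖z‖ ^ 2 - ‖kmIter S lam n z‖ ^ 2 := Finset.sum_range_sub' _ n
    _ ≤ ‖z‖ ^ 2 := sub_le_self _ (sq_nonneg _)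

lemma tendsto_kmIter_apply_sub (hdiv : ¬ Summable fun n => (1 - lam n) * lam n) (z : X) :
    Tendsto (fun n => kmIter S lam n (z - S z)) atTop (𝓝 0) := by
  refine tendsto_zero_iff_norm_tendsto_zero.2 <| tendsto_zero_of_antitone_of_summable_mul_sq
    (antitone_nat_of_succ_le fun n => norm_kmStep_apply_le hS (hlam n) _)
    (fun _ => norm_nonneg _) (fun n => ?_) (summable_mul_norm_kmIter_apply_sub_sq hS hlam z) hdiv
  exact mul_nonneg (sub_nonneg.2 (hlam n).2) (hlam n).1

lemma tendsto_kmIter_apply_of_mem_closure_range (hdiv : ¬ Summable fun n => (1 - lam n) * lam n)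
    {v : X} (hv : v ∈ closure (LinearMap.range (1 - (S : X →ₗ[ℝ] X)) : Set X)) :
    Tendsto (fun n => kmIter S lam n v) atTop (𝓝 0) := by
  have hlip n : LipschitzWith 1 (kmIter S lam n) := by
    simpa using AddMonoidHomClass.lipschitz_of_bound (kmIter S lam n) 1
      (by simpa using norm_kmIter_apply_le hS hlam n)
  have hclosed : IsClosed {v : X | Tendsto (fun n => kmIter S lam n v) atTop (𝓝 0)} :=
    (LipschitzWith.uniformEquicontinuous _ 1 hlip).equicontinuous.isClosed_setOfPred_tendsto
      continuous_const
  refine closure_minimal ?_ hclosed hv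
  rintro _ ⟨z, rfl⟩
  simpa using tendsto_kmIter_apply_sub hS hlam hdiv z

lemma tendsto_kmIter_apply_starProjection [CompleteSpace X]
    (hdiv : ¬ Summable fun n => (1 - lam n) * lam n) (y : X) :
    Tendsto (fun n => kmIter S lam n y) atTop
      (𝓝 ((S.eqLocus (1 : X →L[ℝ] X)).starProjection y)) := by
  set K := S.eqLocus (1 : X →L[ℝ] X)
  have hfix : S (K.starProjection y) = K.starProjection y := K.starProjection_apply_mem y
  have hperp :
      y - K.starProjection y ∈ closure (LinearMap.range (1 - (S : X →ₗ[ℝ] X)) : Set X) := by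
    rw [← Submodule.topologicalClosure_coe, ← Submodule.orthogonal_orthogonal_eq_closure]
    exact Submodule.orthogonal_le (S.orthogonal_range_one_sub_le_eqLocus hS)
      (K.sub_starProjection_mem_orthogonal y)
  have hsplit n : kmIter S lam n y =
      K.starProjection y + kmIter S lam n (y - K.starProjection y) := by
    rw [map_sub, kmIter_apply_eq_self hfix, add_sub_cancel]
  have h := (tendsto_const_nhds (x := K.starProjection y)).add
    (tendsto_kmIter_apply_of_mem_closure_range hS hlam hdiv hperp)
  rw [add_zero] at h
  exact h.congr fun n => (hsplit n).symm

end KrasnoselskiiMann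

section Affine

variable {X : Type*} [NormedAddCommGroup X] [InnerProductSpace ℝ X] {T : X → X} {S : X →L[ℝ] X}
  {b p : X}

lemma mem_fixedPoints_iff_sub_mem_eqLocus (hTS : ∀ x, T x = S x + b)
    (hp : p ∈ Function.fixedPoints T) (q : X) :
    q ∈ Function.fixedPoints T ↔ q - p ∈ S.eqLocus (1 : X →L[ℝ] X) := by
  have hp : S p + b = p := (hTS p).symm.trans hp
  rw [LinearMap.mem_eqLocus, Function.mem_fixedPoints, Function.IsFixedPt, hTS]
  simp only [ContinuousLinearMap.coe_coe, one_apply_eq_self, map_sub]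
  constructor
  · intro h
    linear_combination (norm := module) h - hp
  · intro h
    linear_combination (norm := module) h + hp

lemma sub_eq_kmIter_apply_sub (hTS : ∀ x, T x = S x + b) (hp : p ∈ Function.fixedPoints T)
    {lam : ℕ → ℝ} {x : ℕ → X} (hx : ∀ n, x (n + 1) = (1 - lam n) • x n + lam n • T (x n))
    (n : ℕ) : x n - p = kmIter S lam n (x 0 - p) := by
  have hp : S p + b = p := (hTS p).symm.trans hp
  induction n with
  | zero => rfl
  | succ n ih =>
    rw [kmIter_succ_apply, ← ih, kmStep_apply, hx, hTS, map_sub]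
    linear_combination (norm := module) lam n • hp

end Affine

/-- **Affine extension of the main result.** If `T x = S x + b` with `S` a continuous
linear nonexpansive operator, `F := Fix T` is nonempty, `(λₙ)` lies in `[0,1]` with
`∑ (1-λₙ)λₙ = +∞`, and `xₙ₊₁ = (1-λₙ)xₙ + λₙ T xₙ`, then `(xₙ)` converges strongly to
the metric projection of `x₀` onto `F`, i.e. to the (unique) point `p ∈ F` nearest to
`x₀`. -/
theorem km_affine_strong_convergence
    {X : Type*} [NormedAddCommGroup X] [InnerProductSpace ℝ X] [CompleteSpace X]
    (T : X → X) (S : X →L[ℝ] X) (b : X)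
    (hS : ∀ x : X, ‖S x‖ ≤ ‖x‖) (hTS : ∀ x : X, T x = S x + b)
    (hF : (Function.fixedPoints T).Nonempty)
    (lam : ℕ → ℝ) (hlam : ∀ n, lam n ∈ Set.Icc (0 : ℝ) 1)
    (hdiv : ¬ Summable (fun n => (1 - lam n) * lam n))
    (x : ℕ → X) (hx : ∀ n, x (n + 1) = (1 - lam n) • x n + lam n • T (x n)) :
    ∃ p ∈ Function.fixedPoints T,
      (∀ q ∈ Function.fixedPoints T, dist (x 0) p ≤ dist (x 0) q) ∧
        Tendsto x atTop (𝓝 p) := by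
  obtain ⟨p₀, hp₀⟩ := hF
  set K := S.eqLocus (1 : X →L[ℝ] X)
  have hfix := mem_fixedPoints_iff_sub_mem_eqLocus hTS hp₀
  refine ⟨p₀ + K.starProjection (x 0 - p₀), ?_, fun q hq => ?_, ?_⟩
  · rw [hfix, add_sub_cancel_left]
    exact K.starProjection_apply_mem _
  · rw [dist_eq_norm, dist_eq_norm, ← sub_sub, ← sub_sub_sub_cancel_right (x 0) q p₀]
    exact K.norm_sub_starProjection_le _ ((hfix q).1 hq)
  · have h := (tendsto_kmIter_apply_starProjection hS hlam hdiv (x 0 - p₀)).const_add p₀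
    refine h.congr fun n => ?_
    rw [← sub_eq_kmIter_apply_sub hTS hp₀ hx, add_sub_cancel]
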